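/- arXiv:2605.20380 — 8 statements merged into one kernel-verified Lean document; each statement's English description precedes it below -/
import Mathlib

section
/- Let ρ>0 and let h:ℝ→ℝ be 2π-periodic and ρ-trigonometrically convex, i.e., for all t₁<t₂<t₃ with t₃-t₁<π/ρ one has h(t₁)sin ρ(t₂-t₃)+h(t₂)sin ρ(t₃-t₁)+h(t₃)sin ρ(t₁-t₂)≤0. If h(0)=0 and h is differentiable from the right at 0 with right derivative h'₊(0), then for all t∈(0,π/ρ) one has ρ·h(t) ≥ h'₊(0)·sin(ρt). -/
open Real Set

theorem right_derivative_bound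
    (ρ : ℝ) (hρ : 0 < ρ) (h : ℝ → ℝ)
    (hper : ∀ t, h (t + 2 * π) = h t)
    (hTC : ∀ t₁ t₂ t₃ : ℝ, t₁ < t₂ → t₂ < t₃ → t₃ - t₁ < π / ρ →
      h t₁ * Real.sin (ρ * (t₂ - t₃)) + h t₂ * Real.sin (ρ * (t₃ - t₁)) +
        h t₃ * Real.sin (ρ * (t₁ - t₂)) ≤ 0)
    (h0 : h 0 = 0) (d : ℝ)
    (hd : HasDerivWithinAt h d (Set.Ici 0) 0) :
    ∀ t ∈ Set.Ioo 0 (π / ρ), ρ * h t ≥ d * Real.sin (ρ * t) := by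
  intro t ht
  obtain ⟨ht0, htπ⟩ := ht
  -- key pointwise inequality for s ∈ Ioo 0 t
  have key : ∀ s ∈ Ioo (0:ℝ) t, (h s / s) * Real.sin (ρ * t) ≤ h t * (Real.sin (ρ * s) / s) := by
    intro s hs
    have h1 := hTC 0 s t hs.1 hs.2 (by linarith)
    rw [h0] at h1
    have e1 : Real.sin (ρ * (0 - s)) = - Real.sin (ρ * s) := by
      rw [zero_sub, mul_neg, Real.sin_neg]
    have e2 : Real.sin (ρ * (t - 0)) = Real.sin (ρ * t) := by rw [sub_zero]
    rw [e1, e2] at h1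
    have h2 : h s * Real.sin (ρ * t) ≤ h t * Real.sin (ρ * s) := by linarith
    have hs0 : (0:ℝ) < s := hs.1
    have h3 : h s * Real.sin (ρ * t) * s⁻¹ ≤ h t * Real.sin (ρ * s) * s⁻¹ :=
      mul_le_mul_of_nonneg_right h2 (inv_nonneg.mpr hs0.le)
    calc h s / s * Real.sin (ρ * t) = h s * Real.sin (ρ * t) * s⁻¹ := by ring
      _ ≤ h t * Real.sin (ρ * s) * s⁻¹ := h3
      _ = h t * (Real.sin (ρ * s) / s) := by ring
  -- limit of h s / s as s → 0+
  have hd' : HasDerivWithinAt h d (Set.Ioi 0) 0 := hd.mono Set.Ioi_subset_Ici_self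
  have L1 : Filter.Tendsto (fun s => h s / s) (nhdsWithin 0 (Set.Ioi 0)) (nhds d) := by
    have := hasDerivWithinAt_iff_tendsto_slope.mp hd'
    have hset : Set.Ioi (0:ℝ) \ {0} = Set.Ioi 0 := by
      ext x; simp (config := {contextual := true}) [lt_irrefl]
    rw [hset] at this
    refine this.congr' ?_
    filter_upwards [self_mem_nhdsWithin] with x hx
    simp [slope, h0, div_eq_inv_mul]
  -- limit of sin(ρ s)/s as s → 0+
  have Lg : HasDerivAt (fun s : ℝ => Real.sin (ρ * s)) ρ 0 := by
    have h1 : HasDerivAt (fun s : ℝ => ρ * s) ρ 0 := by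
      simpa using (hasDerivAt_id (0:ℝ)).const_mul ρ
    have h2 := (Real.hasDerivAt_sin (ρ * 0)).comp 0 h1
    simpa [Function.comp_def] using h2
  have L2 : Filter.Tendsto (fun s => Real.sin (ρ * s) / s) (nhdsWithin 0 (Set.Ioi 0)) (nhds ρ) := by
    have := hasDerivWithinAt_iff_tendsto_slope.mp (Lg.hasDerivWithinAt (s := Set.Ioi 0))
    have hset : Set.Ioi (0:ℝ) \ {0} = Set.Ioi 0 := by
      ext x; simp (config := {contextual := true}) [lt_irrefl]
    rw [hset] at this
    refine this.congr' ?_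
    filter_upwards [self_mem_nhdsWithin] with x hx
    simp [slope, div_eq_inv_mul]
  -- pass to the limit
  have hIoo : Set.Ioo (0:ℝ) t ∈ nhdsWithin 0 (Set.Ioi 0) :=
    Ioo_mem_nhdsGT_of_mem ⟨le_refl 0, ht0⟩
  have hfin : d * Real.sin (ρ * t) ≤ h t * ρ := by
    refine le_of_tendsto_of_tendsto (L1.mul_const _) (Filter.Tendsto.const_mul _ L2) ?_
    filter_upwards [hIoo] with s hs
    exact key s hs
  linarith
end

section
/- Let ρ>0 and let h:ℝ→ℝ be 2π-periodic and ρ-trigonometrically convex. If h(0)=0 and h has left derivative h'₋(0) at 0, then for all t∈(-π/ρ,0) one has ρ·h(t) ≥ h'₋(0)·sin(ρt). -/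
open Real Set

theorem left_derivative_bound
    (ρ : ℝ) (hρ : 0 < ρ) (h : ℝ → ℝ)
    (hper : ∀ t, h (t + 2 * π) = h t)
    (hTC : ∀ t₁ t₂ t₃ : ℝ, t₁ < t₂ → t₂ < t₃ → t₃ - t₁ < π / ρ →
      h t₁ * Real.sin (ρ * (t₂ - t₃)) + h t₂ * Real.sin (ρ * (t₃ - t₁)) +
        h t₃ * Real.sin (ρ * (t₁ - t₂)) ≤ 0)
    (h0 : h 0 = 0) (d : ℝ)
    (hd : HasDerivWithinAt h d (Set.Iic 0) 0) :
    ∀ t ∈ Set.Ioo (-(π / ρ)) 0, ρ * h t ≥ d * Real.sin (ρ * t) := by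
  intro t ht
  obtain ⟨ht1, ht2⟩ := ht
  set f : ℝ → ℝ := fun s => h s * Real.sin (ρ * t) - h t * Real.sin (ρ * s) with hfdef
  have hfpos : ∀ s ∈ Set.Ioo t 0, 0 ≤ f s := by
    rintro s ⟨hs1, hs2⟩
    have key := hTC t s 0 hs1 hs2 (by linarith)
    have e1 : Real.sin (ρ * (0 - t)) = -Real.sin (ρ * t) := by
      rw [show ρ * (0 - t) = -(ρ * t) by ring, Real.sin_neg]
    have e2 : ρ * (s - 0) = ρ * s := by ring
    rw [h0, e1, e2, zero_mul, add_zero] at key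
    simp only [hfdef]
    linarith
  have hf0 : f 0 = 0 := by simp [hfdef, h0]
  have hF : HasDerivWithinAt f
      (d * Real.sin (ρ * t) - h t * (Real.cos (ρ * 0) * (ρ * 1))) (Set.Iic 0) 0 := by
    exact (hd.mul_const _).sub
      ((((hasDerivAt_id (0:ℝ)).const_mul ρ).sin.hasDerivWithinAt).const_mul (h t))
  have hset : Set.Iic (0:ℝ) \ {0} = Set.Iio 0 := by
    ext x
    simp [lt_iff_le_and_ne]
  rw [hasDerivWithinAt_iff_tendsto_slope, hset] at hF
  have hev : ∀ᶠ s in nhdsWithin (0:ℝ) (Set.Iio 0), slope f 0 s ≤ 0 := by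
    filter_upwards [self_mem_nhdsWithin,
      (eventually_gt_nhds ht2).filter_mono nhdsWithin_le_nhds] with s hs hts
    have hfs : 0 ≤ f s := hfpos s ⟨hts, hs⟩
    have : slope f 0 s = f s / s := by
      rw [slope_def_field, hf0]; ring
    rw [this]
    exact div_nonpos_of_nonneg_of_nonpos hfs hs.le
  have hle : d * Real.sin (ρ * t) - h t * (Real.cos (ρ * 0) * (ρ * 1)) ≤ 0 :=
    le_of_tendsto hF hev
  have hcos : Real.cos (ρ * 0) = 1 := by norm_num
  rw [hcos] at hle
  linarith
end

section
/- Let ρ>0 and let h:ℝ→ℝ be 2π-periodic, continuous, ρ-trigonometrically convex, with h(α)=h(β)=0 for some α<β with β-α≤π/ρ, and h<0 on (α,β). Suppose the one-sided derivatives A:=-h'₊(α)/ρ ≥ 0 and B:=h'₋(β)/ρ ≥ 0 exist. Then for all t∈[α-π/ρ, β]: A·sin ρ(α-t) ≤ h(t), and for all t∈[α, β+π/ρ]: B·sin ρ(t-β) ≤ h(t). -/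
open Real Set

private lemma slope_cmp_right (f g : ℝ → ℝ) (d e a δ : ℝ) (hδ : 0 < δ)
    (hf : HasDerivWithinAt f d (Set.Ici a) a) (hg : HasDerivWithinAt g e (Set.Ici a) a)
    (heq : f a = g a) (hle : ∀ s ∈ Set.Ioo a (a + δ), f s ≤ g s) : d ≤ e := by
  rw [hasDerivWithinAt_iff_tendsto_slope, Set.Ici_sdiff_left] at hf hg
  refine le_of_tendsto_of_tendsto hf hg ?_
  filter_upwards [Ioo_mem_nhdsGT_of_mem
    (show a ∈ Set.Ico a (a + δ) from ⟨le_refl a, by linarith⟩)] with s hs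
  rw [slope_def_field, slope_def_field, heq]
  have h1 : (0:ℝ) < s - a := by linarith [hs.1]
  gcongr
  linarith [hle s hs]

private lemma slope_cmp_left (f g : ℝ → ℝ) (d e a δ : ℝ) (hδ : 0 < δ)
    (hf : HasDerivWithinAt f d (Set.Iic a) a) (hg : HasDerivWithinAt g e (Set.Iic a) a)
    (heq : f a = g a) (hle : ∀ s ∈ Set.Ioo (a - δ) a, f s ≤ g s) : e ≤ d := by
  rw [hasDerivWithinAt_iff_tendsto_slope, Set.Iic_diff_right] at hf hg
  refine le_of_tendsto_of_tendsto hg hf ?_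
  filter_upwards [Ioo_mem_nhdsLT_of_mem
    (show a ∈ Set.Ioc (a - δ) a from ⟨by linarith, le_refl a⟩)] with s hs
  rw [slope_def_field, slope_def_field, heq]
  have h1 : s - a < 0 := by linarith [hs.2]
  rw [div_le_div_right_of_neg h1]
  linarith [hle s hs]

private lemma hasDerivAt_csin (c ρ a : ℝ) :
    HasDerivAt (fun s => c * Real.sin (ρ * (s - a))) (c * ρ) a := by
  have hu : HasDerivAt (fun s : ℝ => ρ * (s - a)) ρ a := by
    simpa using ((hasDerivAt_id a).sub_const a).const_mul ρ
  have := ((Real.hasDerivAt_sin (ρ * (a - a))).comp a hu).const_mul c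
  simpa using this

private lemma hasDerivAt_csin' (c ρ a : ℝ) :
    HasDerivAt (fun s => c * Real.sin (ρ * (a - s))) (-(c * ρ)) a := by
  have hu : HasDerivAt (fun s : ℝ => ρ * (a - s)) (-ρ) a := by
    simpa using ((hasDerivAt_id a).const_sub a).const_mul ρ
  have := ((Real.hasDerivAt_sin (ρ * (a - a))).comp a hu).const_mul c
  simpa [mul_comm] using this

theorem minorant_at_zeros
    (ρ : ℝ) (hρ : 0 < ρ) (h : ℝ → ℝ)
    (hper : ∀ t, h (t + 2 * π) = h t)
    (hcont : Continuous h)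
    (hTC : ∀ t₁ t₂ t₃ : ℝ, t₁ < t₂ → t₂ < t₃ → t₃ - t₁ < π / ρ →
      h t₁ * Real.sin (ρ * (t₂ - t₃)) + h t₂ * Real.sin (ρ * (t₃ - t₁)) +
        h t₃ * Real.sin (ρ * (t₁ - t₂)) ≤ 0)
    (α β : ℝ) (hαβ : α < β) (hlen : β - α ≤ π / ρ)
    (hα0 : h α = 0) (hβ0 : h β = 0)
    (hneg : ∀ t ∈ Set.Ioo α β, h t < 0)
    (dα dβ : ℝ)
    (hdα : HasDerivWithinAt h dα (Set.Ici α) α)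
    (hdβ : HasDerivWithinAt h dβ (Set.Iic β) β)
    (A B : ℝ) (hA : A = -dα / ρ) (hB : B = dβ / ρ)
    (hA0 : 0 ≤ A) (hB0 : 0 ≤ B) :
    (∀ t ∈ Set.Icc (α - π / ρ) β, A * Real.sin (ρ * (α - t)) ≤ h t) ∧
      (∀ t ∈ Set.Icc α (β + π / ρ), B * Real.sin (ρ * (t - β)) ≤ h t) := by
  have hπρ : 0 < π / ρ := div_pos Real.pi_pos hρ
  -- Part 1 on the open interval
  have key1 : ∀ t ∈ Set.Ioo (α - π / ρ) β, A * Real.sin (ρ * (α - t)) ≤ h t := by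
    intro t ht
    rcases lt_trichotomy t α with hlt | heq | hgt
    · -- t < α
      have h1 : 0 < ρ * (α - t) := by
        have : 0 < α - t := by linarith
        positivity
      have h2 : ρ * (α - t) < π := by
        have h3 : α - t < π / ρ := by linarith [ht.1]
        have := (lt_div_iff₀ hρ).mp h3
        linarith
      have hsin : 0 < Real.sin (ρ * (α - t)) := Real.sin_pos_of_pos_of_lt_pi h1 h2
      set S := Real.sin (ρ * (α - t)) with hS
      set K := -h t / S with hK
      have hle : ∀ s ∈ Set.Ioo α (α + (t + π / ρ - α)),
          K * Real.sin (ρ * (s - α)) ≤ h s := by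
        intro s hs
        have hconv := hTC t α s hlt hs.1 (by linarith [hs.2])
        rw [hα0] at hconv
        have e1 : Real.sin (ρ * (α - s)) = -Real.sin (ρ * (s - α)) := by
          rw [show ρ * (α - s) = -(ρ * (s - α)) by ring, Real.sin_neg]
        have e2 : Real.sin (ρ * (t - α)) = -S := by
          rw [show ρ * (t - α) = -(ρ * (α - t)) by ring, Real.sin_neg]
        rw [e1, e2] at hconv
        -- -h t * sin(ρ(s-α)) - h s * S ≤ 0
        have h4 : -h t * Real.sin (ρ * (s - α)) ≤ h s * S := by linarith
        rw [hK, div_mul_eq_mul_div, div_le_iff₀ hsin]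
        linarith
      have hd : K * ρ ≤ dα :=
        slope_cmp_right (fun s => K * Real.sin (ρ * (s - α))) h (K * ρ) dα α
          (t + π / ρ - α) (by linarith [ht.1])
          (hasDerivAt_csin K ρ α).hasDerivWithinAt hdα (by simp [hα0]) hle
      -- K*ρ ≤ dα  ⇒  -h t * ρ ≤ dα * S
      have hkey : -h t * ρ ≤ dα * S := by
        have h5 := mul_le_mul_of_nonneg_right hd hsin.le
        have h6 : K * ρ * S = -h t * ρ := by
          rw [hK]; field_simp
        linarith
      rw [hA, div_mul_eq_mul_div, div_le_iff₀ hρ]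
      nlinarith [hkey]
    · simp [heq, hα0]
    · -- α < t
      have h1 : 0 < ρ * (t - α) := by
        have : 0 < t - α := by linarith
        positivity
      have h2 : ρ * (t - α) < π := by
        have h3 : t - α < π / ρ := by linarith [ht.2]
        have := (lt_div_iff₀ hρ).mp h3
        linarith
      have hsin : 0 < Real.sin (ρ * (t - α)) := Real.sin_pos_of_pos_of_lt_pi h1 h2
      set S := Real.sin (ρ * (t - α)) with hS
      set c := h t / S with hc
      have hle : ∀ s ∈ Set.Ioo α (α + (t - α)),
          h s ≤ c * Real.sin (ρ * (s - α)) := by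
        intro s hs
        have hconv := hTC α s t hs.1 (by linarith [hs.2]) (by linarith [ht.2, hlen])
        rw [hα0] at hconv
        have e1 : Real.sin (ρ * (α - s)) = -Real.sin (ρ * (s - α)) := by
          rw [show ρ * (α - s) = -(ρ * (s - α)) by ring, Real.sin_neg]
        rw [e1] at hconv
        have h4 : h s * S ≤ h t * Real.sin (ρ * (s - α)) := by linarith
        rw [hc, div_mul_eq_mul_div, le_div_iff₀ hsin]
        linarith
      have hd : dα ≤ c * ρ :=
        slope_cmp_right h (fun s => c * Real.sin (ρ * (s - α))) dα (c * ρ) α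
          (t - α) (by linarith) hdα
          (hasDerivAt_csin c ρ α).hasDerivWithinAt (by simp [hα0]) hle
      have hkey : dα * S ≤ h t * ρ := by
        have h5 := mul_le_mul_of_nonneg_right hd hsin.le
        have h6 : c * ρ * S = h t * ρ := by
          rw [hc]; field_simp
        linarith
      have e2 : Real.sin (ρ * (α - t)) = -S := by
        rw [show ρ * (α - t) = -(ρ * (t - α)) by ring, Real.sin_neg]
      rw [e2, hA, div_mul_eq_mul_div, div_le_iff₀ hρ]
      nlinarith [hkey]
  -- Part 2 on the open interval
  have key2 : ∀ t ∈ Set.Ioo α (β + π / ρ), B * Real.sin (ρ * (t - β)) ≤ h t := by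
    intro t ht
    rcases lt_trichotomy t β with hlt | heq | hgt
    · -- t < β
      have h1 : 0 < ρ * (β - t) := by
        have : 0 < β - t := by linarith
        positivity
      have h2 : ρ * (β - t) < π := by
        have h3 : β - t < π / ρ := by linarith [ht.1]
        have := (lt_div_iff₀ hρ).mp h3
        linarith
      have hsin : 0 < Real.sin (ρ * (β - t)) := Real.sin_pos_of_pos_of_lt_pi h1 h2
      set S := Real.sin (ρ * (β - t)) with hS
      set K := h t / S with hK
      have hle : ∀ s ∈ Set.Ioo (β - (β - t)) β,
          h s ≤ K * Real.sin (ρ * (β - s)) := by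
        intro s hs
        have hconv := hTC t s β (by linarith [hs.1]) hs.2 (by linarith [ht.1, hlen])
        rw [hβ0] at hconv
        have e1 : Real.sin (ρ * (s - β)) = -Real.sin (ρ * (β - s)) := by
          rw [show ρ * (s - β) = -(ρ * (β - s)) by ring, Real.sin_neg]
        rw [e1] at hconv
        have h4 : h s * S ≤ h t * Real.sin (ρ * (β - s)) := by linarith
        rw [hK, div_mul_eq_mul_div, le_div_iff₀ hsin]
        linarith
      have hd : -(K * ρ) ≤ dβ :=
        slope_cmp_left h (fun s => K * Real.sin (ρ * (β - s))) dβ (-(K * ρ)) β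
          (β - t) (by linarith) hdβ
          (hasDerivAt_csin' K ρ β).hasDerivWithinAt (by simp [hβ0]) hle
      have hkey : -h t * ρ ≤ dβ * S := by
        have h5 := mul_le_mul_of_nonneg_right hd hsin.le
        have h6 : -(K * ρ) * S = -h t * ρ := by
          rw [hK]; field_simp
        linarith
      have e2 : Real.sin (ρ * (t - β)) = -S := by
        rw [show ρ * (t - β) = -(ρ * (β - t)) by ring, Real.sin_neg]
      rw [e2, hB, div_mul_eq_mul_div, div_le_iff₀ hρ]
      nlinarith [hkey]
    · simp [heq, hβ0]
    · -- β < t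
      have h1 : 0 < ρ * (t - β) := by
        have : 0 < t - β := by linarith
        positivity
      have h2 : ρ * (t - β) < π := by
        have h3 : t - β < π / ρ := by linarith [ht.2]
        have := (lt_div_iff₀ hρ).mp h3
        linarith
      have hsin : 0 < Real.sin (ρ * (t - β)) := Real.sin_pos_of_pos_of_lt_pi h1 h2
      set S := Real.sin (ρ * (t - β)) with hS
      set K := -h t / S with hK
      have hle : ∀ s ∈ Set.Ioo (β - (β + π / ρ - t)) β,
          K * Real.sin (ρ * (β - s)) ≤ h s := by
        intro s hs
        have hconv := hTC s β t hs.2 hgt (by linarith [hs.1])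
        rw [hβ0] at hconv
        have e1 : Real.sin (ρ * (β - t)) = -S := by
          rw [show ρ * (β - t) = -(ρ * (t - β)) by ring, Real.sin_neg]
        have e2 : Real.sin (ρ * (s - β)) = -Real.sin (ρ * (β - s)) := by
          rw [show ρ * (s - β) = -(ρ * (β - s)) by ring, Real.sin_neg]
        rw [e1, e2] at hconv
        have h4 : -h t * Real.sin (ρ * (β - s)) ≤ h s * S := by linarith
        rw [hK, div_mul_eq_mul_div, div_le_iff₀ hsin]
        linarith
      have hd : dβ ≤ -(K * ρ) :=
        slope_cmp_left (fun s => K * Real.sin (ρ * (β - s))) h (-(K * ρ)) dβ β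
          (β + π / ρ - t) (by linarith [ht.2])
          (hasDerivAt_csin' K ρ β).hasDerivWithinAt hdβ (by simp [hβ0]) hle
      have hkey : dβ * S ≤ h t * ρ := by
        have h5 := mul_le_mul_of_nonneg_right hd hsin.le
        have h6 : -(K * ρ) * S = h t * ρ := by
          rw [hK]; field_simp
        linarith
      rw [hB, div_mul_eq_mul_div, div_le_iff₀ hρ]
      nlinarith [hkey]
  constructor
  · intro t ht
    have hne : α - π / ρ < β := by linarith
    have hsub : Set.Icc (α - π / ρ) β ⊆ {t | A * Real.sin (ρ * (α - t)) ≤ h t} := by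
      rw [← closure_Ioo hne.ne]
      exact closure_minimal (fun t ht => key1 t ht)
        (isClosed_le (by fun_prop) hcont)
    exact hsub ht
  · intro t ht
    have hne : α < β + π / ρ := by linarith
    have hsub : Set.Icc α (β + π / ρ) ⊆ {t | B * Real.sin (ρ * (t - β)) ≤ h t} := by
      rw [← closure_Ioo hne.ne]
      exact closure_minimal (fun t ht => key2 t ht)
        (isClosed_le (by fun_prop) hcont)
    exact hsub ht
end

section
/- Let ρ>1/2, L=⌈2ρ⌉-1, and T=2π/L, so T>π/ρ. Define the T-periodic function h by h(t)=cos(ρt) for |t|≤T/2. Suppose τ:ℝ→ℝ is continuous, T-periodic-in-structure (defined on ℝ), satisfies τ(t)≤h(t) for all t, and satisfies τ(s-π/(2ρ))+τ(s+π/(2ρ))≥0 for every s∈ℝ. Then τ(π/(2ρ)+Tk)=τ(-π/(2ρ)+Tk)=0 for every integer k, and τ(T/2+Tk)<0 for every integer k. -/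
open Real Set

theorem example_L_singular_points
    (ρ : ℝ) (hρ : 1 / 2 < ρ) (L : ℤ) (hL : L = ⌈(2 : ℝ) * ρ⌉ - 1)
    (T : ℝ) (hT : T = 2 * π / (L : ℝ)) (hTρ : π / ρ < T)
    (h : ℝ → ℝ)
    (hhper : ∀ t, h (t + T) = h t)
    (hhdef : ∀ t : ℝ, |t| ≤ T / 2 → h t = Real.cos (ρ * t))
    (τ : ℝ → ℝ) (hτcont : Continuous τ)
    (hτle : ∀ t, τ t ≤ h t)
    (hτsum : ∀ s : ℝ, τ (s - π / (2 * ρ)) + τ (s + π / (2 * ρ)) ≥ 0) :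
    ∀ k : ℤ, τ (π / (2 * ρ) + T * k) = 0 ∧ τ (-(π / (2 * ρ)) + T * k) = 0 ∧
      τ (T / 2 + T * k) < 0 := by
  have hρ0 : 0 < ρ := by linarith
  have hπ : 0 < π := Real.pi_pos
  have hT0 : 0 < T := lt_trans (by positivity) hTρ
  have hL0 : (0 : ℝ) < (L : ℝ) := by
    by_contra hc
    push_neg at hc
    have : T ≤ 0 := by
      rw [hT]
      exact div_nonpos_of_nonneg_of_nonpos (by positivity) hc
    linarith
  have hL1 : (1 : ℝ) ≤ (L : ℝ) := by exact_mod_cast (by exact_mod_cast hL0 : (0:ℤ) < L)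
  have hceil_lt : (⌈(2 : ℝ) * ρ⌉ : ℝ) < 2 * ρ + 1 := Int.ceil_lt_add_one _
  have hceil_ge : (2 : ℝ) * ρ ≤ (⌈(2 : ℝ) * ρ⌉ : ℝ) := Int.le_ceil _
  have hLval : (L : ℝ) = (⌈(2 : ℝ) * ρ⌉ : ℝ) - 1 := by rw [hL]; push_cast; ring
  have hLlt : (L : ℝ) < 2 * ρ := by rw [hLval]; linarith
  have hLgt : 2 * ρ < 3 * (L : ℝ) := by
    rcases lt_or_ge ρ (3 / 2) with hc | hc
    · linarith
    · rw [hLval]; linarith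
  have hρT1 : π < ρ * T := by
    rw [div_lt_iff₀ hρ0] at hTρ; linarith [hTρ]
  have hρT2 : ρ * T < 3 * π := by
    rw [hT]
    rw [show ρ * (2 * π / (L : ℝ)) = (2 * ρ * π) / (L : ℝ) by ring,
      div_lt_iff₀ hL0]
    nlinarith
  -- h at T/2 is negative
  have hcos : Real.cos (ρ * (T / 2)) < 0 :=
    Real.cos_neg_of_pi_div_two_lt_of_lt (by linarith) (by linarith)
  have habsT2 : |T / 2| ≤ T / 2 := by rw [abs_of_nonneg (by linarith)]
  have hhT2 : h (T / 2) < 0 := by rw [hhdef _ habsT2]; exact hcos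
  -- h at ±π/(2ρ) is zero
  have hq0 : 0 < π / (2 * ρ) := by positivity
  have hqle : π / (2 * ρ) ≤ T / 2 := by
    have : π / (2 * ρ) = (π / ρ) / 2 := by rw [div_div]; ring_nf
    linarith
  have hmul : ρ * (π / (2 * ρ)) = π / 2 := by field_simp
  have hh1 : h (π / (2 * ρ)) = 0 := by
    rw [hhdef _ (by rw [abs_of_nonneg hq0.le]; exact hqle), hmul, Real.cos_pi_div_two]
  have hh2 : h (-(π / (2 * ρ))) = 0 := by
    rw [hhdef _ (by rw [abs_neg, abs_of_nonneg hq0.le]; exact hqle),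
      mul_neg, hmul, Real.cos_neg, Real.cos_pi_div_two]
  have hper : Function.Periodic h T := hhper
  have hshift : ∀ (x : ℝ) (k : ℤ), h (x + T * (k : ℝ)) = h x := by
    intro x k
    have := (hper.int_mul k) x
    rwa [show x + T * (k : ℝ) = x + (k : ℝ) * T by ring]
  intro k
  have ha : τ (π / (2 * ρ) + T * k) ≤ 0 := by
    calc τ (π / (2 * ρ) + T * k) ≤ h (π / (2 * ρ) + T * k) := hτle _
    _ = 0 := by rw [hshift, hh1]
  have hb : τ (-(π / (2 * ρ)) + T * k) ≤ 0 := by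
    calc τ (-(π / (2 * ρ)) + T * k) ≤ h (-(π / (2 * ρ)) + T * k) := hτle _
    _ = 0 := by rw [hshift, hh2]
  have hsum := hτsum (T * k)
  rw [show T * (k : ℝ) - π / (2 * ρ) = -(π / (2 * ρ)) + T * (k : ℝ) by ring,
    show T * (k : ℝ) + π / (2 * ρ) = π / (2 * ρ) + T * (k : ℝ) by ring] at hsum
  refine ⟨by linarith, by linarith, ?_⟩
  calc τ (T / 2 + T * k) ≤ h (T / 2 + T * k) := hτle _
  _ = h (T / 2) := hshift _ _
  _ < 0 := hhT2
end

section
/- Let h̃:ℝ→ℝ be continuous and locally 1-trigonometrically convex, meaning for all t₁<t₂<t₃ with t₃-t₁<π: h̃(t₁)sin(t₂-t₃)+h̃(t₂)sin(t₃-t₁)+h̃(t₃)sin(t₁-t₂)≤0. Then for every t and ε∈(0,π/2): 2h̃(t)cos ε ≤ h̃(t+ε)+h̃(t-ε), and consequently h̃(t-π/2)+h̃(t+π/2) ≥ 0. -/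
open Real Set

theorem locally_1TC_midpoint_ineq
    (h : ℝ → ℝ) (hcont : Continuous h)
    (hTC : ∀ t₁ t₂ t₃ : ℝ, t₁ < t₂ → t₂ < t₃ → t₃ - t₁ < π →
      h t₁ * Real.sin (t₂ - t₃) + h t₂ * Real.sin (t₃ - t₁) +
        h t₃ * Real.sin (t₁ - t₂) ≤ 0) :
    (∀ t : ℝ, ∀ ε ∈ Set.Ioo 0 (π / 2),
        2 * h t * Real.cos ε ≤ h (t + ε) + h (t - ε)) ∧
      ∀ t : ℝ, h (t - π / 2) + h (t + π / 2) ≥ 0 := by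
  have key : ∀ t : ℝ, ∀ ε ∈ Set.Ioo 0 (π / 2),
      2 * h t * Real.cos ε ≤ h (t + ε) + h (t - ε) := by
    intro t ε ⟨hε0, hεπ⟩
    have h1 : t - ε < t := by linarith
    have h2 : t < t + ε := by linarith
    have h3 : (t + ε) - (t - ε) < π := by linarith [Real.pi_pos]
    have := hTC (t - ε) t (t + ε) h1 h2 h3
    have e1 : t - (t + ε) = -ε := by ring
    have e2 : (t + ε) - (t - ε) = 2 * ε := by ring
    have e3 : (t - ε) - t = -ε := by ring
    rw [e1, e2, e3, Real.sin_neg, Real.sin_two_mul] at this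
    have hs : 0 < Real.sin ε :=
      Real.sin_pos_of_pos_of_lt_pi hε0 (by linarith [Real.pi_pos])
    nlinarith [this, hs]
  refine ⟨key, fun t => ?_⟩
  have hlim : Filter.Tendsto (fun ε => h (t + ε) + h (t - ε) - 2 * h t * Real.cos ε)
      (nhdsWithin (π / 2) (Set.Iio (π / 2)))
      (nhds (h (t + π / 2) + h (t - π / 2) - 2 * h t * Real.cos (π / 2))) := by
    apply Filter.Tendsto.mono_left _ nhdsWithin_le_nhds
    exact (((hcont.comp (continuous_const.add continuous_id)).add
      (hcont.comp (continuous_const.sub continuous_id))).sub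
      (continuous_const.mul Real.continuous_cos)).tendsto _
  have hne : (nhdsWithin (π / 2) (Set.Iio (π / 2))).NeBot := by
    exact nhdsLT_neBot _
  have hev : ∀ᶠ ε in nhdsWithin (π / 2) (Set.Iio (π / 2)),
      0 ≤ h (t + ε) + h (t - ε) - 2 * h t * Real.cos ε := by
    filter_upwards [self_mem_nhdsWithin,
      eventually_nhdsWithin_of_eventually_nhds
        (eventually_gt_nhds (by positivity : (0:ℝ) < π / 2))] with ε h1 h2
    have := key t ε ⟨h2, h1⟩
    linarith
  have := ge_of_tendsto hlim hev
  rw [Real.cos_pi_div_two] at this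
  linarith
end

section
/- Let h̃:ℝ→ℝ be continuous and locally 1-trigonometrically convex. Fix t∈ℝ and a point (x*,y*) with x*cos t + y*sin t = h̃(t). If 0<α<β≤π/2 and x*cos(t+α)+y*sin(t+α) ≤ h̃(t+α), then x*cos(t+β)+y*sin(t+β) ≤ h̃(t+β). -/
open Real Set

theorem halfplane_monotone
    (h : ℝ → ℝ) (hcont : Continuous h)
    (hTC : ∀ t₁ t₂ t₃ : ℝ, t₁ < t₂ → t₂ < t₃ → t₃ - t₁ < π →
      h t₁ * Real.sin (t₂ - t₃) + h t₂ * Real.sin (t₃ - t₁) +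
        h t₃ * Real.sin (t₁ - t₂) ≤ 0)
    (t x y : ℝ)
    (hline : x * Real.cos t + y * Real.sin t = h t)
    (α β : ℝ) (hα : 0 < α) (hαβ : α < β) (hβ : β ≤ π / 2)
    (hin : x * Real.cos (t + α) + y * Real.sin (t + α) ≤ h (t + α)) :
    x * Real.cos (t + β) + y * Real.sin (t + β) ≤ h (t + β) := by
  have hpi := Real.pi_gt_three
  have hsinα : 0 < Real.sin α := Real.sin_pos_of_pos_of_lt_pi hα (by linarith)
  have hsinβ : 0 ≤ Real.sin β :=
    Real.sin_nonneg_of_nonneg_of_le_pi (by linarith) (by linarith)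
  have key := hTC t (t + α) (t + β) (by linarith) (by linarith) (by linarith)
  have e2 : t + α - (t + β) = α - β := by ring
  have e3 : t + β - t = β := by ring
  have e4 : t - (t + α) = -α := by ring
  rw [e2, e3, e4, Real.sin_neg] at key
  have key' : h t * Real.sin (α - β) + h (t + α) * Real.sin β
      - h (t + β) * Real.sin α ≤ 0 := by linarith
  have e1 : (x * Real.cos (t + β) + y * Real.sin (t + β)) * Real.sin α
      = h t * Real.sin (α - β)
        + (x * Real.cos (t + α) + y * Real.sin (t + α)) * Real.sin β := by
    rw [← hline]
    simp only [Real.sin_add, Real.cos_add, Real.sin_sub, Real.cos_sub]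
    ring
  have h2 := mul_le_mul_of_nonneg_right hin hsinβ
  have : (x * Real.cos (t + β) + y * Real.sin (t + β)) * Real.sin α
      ≤ h (t + β) * Real.sin α := by linarith
  exact le_of_mul_le_mul_right this hsinα
end

section
/- Let h be 2-trigonometrically convex, 2π-periodic, with stretched function h̃(t)=h(t/2) of period 4π, and suppose the circumcenter of the associated curve is at the origin, i.e., 0 lies in the convex hull of {R e^{it}: t∈m}, where R=max h̃ and m={t∈ℝ/4πℤ : h̃(t)=R}. Suppose h is not locally 2-balanced: there is no triple α,β,γ∈m with 0<β-α≤π, 0≤γ-β<π and γ-α≥π (mod 4π). Then for any t₁,t₂∈m, t₁-t₂ mod 4π does not belong to {π, 2π, 3π}. -/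
open Real Set Complex

theorem not_locally_balanced_maximizer_gaps
    (h ht : ℝ → ℝ)
    (hper : ∀ t, h (t + 2 * π) = h t)
    (hcont : Continuous h)
    (hTC : ∀ t₁ t₂ t₃ : ℝ, t₁ < t₂ → t₂ < t₃ → t₃ - t₁ < π / 2 →
      h t₁ * Real.sin (2 * (t₂ - t₃)) + h t₂ * Real.sin (2 * (t₃ - t₁)) +
        h t₃ * Real.sin (2 * (t₁ - t₂)) ≤ 0)
    (hstretch : ∀ t, ht t = h (t / 2))
    (R : ℝ) (hRub : ∀ t, ht t ≤ R) (hRmem : ∃ t, ht t = R)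
    (m : Set ℝ) (hm : m = {t : ℝ | ht t = R})
    (hbal : (0 : ℂ) ∈ convexHull ℝ
      {p : ℂ | ∃ t ∈ m, p = (R : ℂ) * Complex.exp (Complex.I * t)})
    (hnotloc : ¬ ∃ α β γ : ℝ, α ∈ m ∧ β ∈ m ∧ γ ∈ m ∧
      0 < β - α ∧ β - α ≤ π ∧ 0 ≤ γ - β ∧ γ - β < π ∧ π ≤ γ - α) :
    ∀ t₁ ∈ m, ∀ t₂ ∈ m, ∀ k : ℤ,
      t₁ - t₂ ≠ π + 4 * π * k ∧ t₁ - t₂ ≠ 2 * π + 4 * π * k ∧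
        t₁ - t₂ ≠ 3 * π + 4 * π * k := by
  have hπ : (0:ℝ) < π := Real.pi_pos
  -- triple-maker
  have mk3 : ∀ α β γ : ℝ, α ∈ m → β ∈ m → γ ∈ m → 0 < β - α → β - α ≤ π →
      0 ≤ γ - β → γ - β < π → π ≤ γ - α → False := by
    intro α β γ h1 h2 h3 h4 h5 h6 h7 h8
    exact hnotloc ⟨α, β, γ, h1, h2, h3, h4, h5, h6, h7, h8⟩
  -- h is 2πℤ-periodic
  have hper' : Function.Periodic h (2*π) := fun x => hper x
  have hperZ : ∀ x : ℝ, ∀ j : ℤ, h (x + 2*π*(j:ℝ)) = h x := by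
    intro x j
    have := (hper'.int_mul j) x
    rwa [show (j:ℝ)*(2*π) = 2*π*(j:ℝ) by ring] at this
  -- m is 4πℤ-invariant
  have hm4 : ∀ t ∈ m, ∀ j : ℤ, t + 4*π*j ∈ m := by
    intro t htm j
    rw [hm] at htm ⊢
    have e : (t + 4*π*j)/2 = t/2 + 2*π*j := by ring
    simp only [Set.mem_setOf_eq] at htm ⊢
    rw [hstretch, e, hperZ, ← hstretch]
    exact htm
  -- no pair at distance π mod 2π
  have pair_pi : ∀ x ∈ m, ∀ y ∈ m, ∀ j : ℤ, y - x ≠ π + 2*π*j := by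
    intro x hx y hy j heq
    rcases Int.even_or_odd j with ⟨i, hi⟩ | ⟨i, hi⟩
    · have hb : x + π ∈ m := by
        have e := hm4 y hy (-i)
        push_cast at e
        have e2 : x + π = y + 4*π*(-(i:ℝ)) := by
          rw [hi] at heq; push_cast at heq; linarith
        rwa [← e2] at e
      exact mk3 x (x+π) (x+π) hx hb hb (by linarith) (by linarith) (by linarith)
        (by linarith) (by linarith)
    · have ha : x + 3*π ∈ m := by
        have e := hm4 y hy (-i)
        push_cast at e
        have e2 : x + 3*π = y + 4*π*(-(i:ℝ)) := by
          rw [hi] at heq; push_cast at heq; linarith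
        rwa [← e2] at e
      have hb : x + 4*π ∈ m := by
        have := hm4 x hx 1; simpa using this
      exact mk3 (x+3*π) (x+4*π) (x+4*π) ha hb hb (by linarith) (by linarith)
        (by linarith) (by linarith) (by linarith)
  -- h bounded by R
  have h_le : ∀ x : ℝ, h x ≤ R := by
    intro x
    have := hRub (2*x)
    rwa [hstretch, show (2*x)/2 = x by ring] at this
  -- R ≥ 0
  obtain ⟨t₀, ht₀⟩ := hRmem
  have hc' : h (t₀/2) = R := by rw [← hstretch]; exact ht₀
  set c : ℝ := t₀/2 with hcdef
  have hR0 : 0 ≤ R := by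
    have key := hTC (c - π/8) c (c + π/8) (by linarith) (by linarith) (by linarith)
    rw [show 2*(c - (c+π/8)) = -(π/4) by ring, show 2*((c+π/8)-(c-π/8)) = π/2 by ring,
      show 2*((c-π/8)-c) = -(π/4) by ring, Real.sin_neg, Real.sin_pi_div_four,
      Real.sin_pi_div_two, hc'] at key
    have h1 := h_le (c - π/8)
    have h3 := h_le (c + π/8)
    have hs2 : (1:ℝ) < Real.sqrt 2 := by
      nlinarith [Real.sq_sqrt (by norm_num : (0:ℝ) ≤ 2), Real.sqrt_nonneg 2]
    nlinarith [key, h1, h3, hs2]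
  -- R > 0 (R = 0 contradicts hnotloc)
  have hRpos : 0 < R := by
    rcases hR0.lt_or_eq with hpos | heq0
    · exact hpos
    · exfalso
      have hR : R = 0 := heq0.symm
      have hc0 : h c = 0 := by rw [hc', hR]
      have h_le0 : ∀ x : ℝ, h x ≤ 0 := fun x => hR ▸ h_le x
      have hzero : ∀ x : ℝ, c - π/2 < x → x < c + π/2 → h x = 0 := by
        intro x hx1 hx2
        rcases lt_trichotomy x c with hlt | heqx | hgt
        · set y : ℝ := (c + x + π/2)/2 with hydef
          have key := hTC x c y hlt (by rw [hydef]; linarith) (by rw [hydef]; linarith)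
          rw [hc0, zero_mul, show 2*(c - y) = -(2*(y-c)) by ring,
            show 2*(x - c) = -(2*(c-x)) by ring, Real.sin_neg, Real.sin_neg] at key
          have s1pos : 0 < Real.sin (2*(y - c)) :=
            Real.sin_pos_of_pos_of_lt_pi (by rw [hydef]; linarith) (by rw [hydef]; linarith)
          have s2pos : 0 < Real.sin (2*(c - x)) :=
            Real.sin_pos_of_pos_of_lt_pi (by linarith) (by linarith)
          have hup : h x * Real.sin (2*(y - c)) ≤ 0 :=
            mul_nonpos_iff.2 (Or.inr ⟨h_le0 x, s1pos.le⟩)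
          have hdn : 0 ≤ h x * Real.sin (2*(y - c)) := by
            nlinarith [mul_nonpos_iff.2 (Or.inr ⟨h_le0 y, s2pos.le⟩)]
          have := le_antisymm hup hdn
          rcases mul_eq_zero.1 this with h0 | h0
          · exact h0
          · exact absurd h0 s1pos.ne'
        · rw [heqx]; exact hc0
        · set y : ℝ := (c + x - π/2)/2 with hydef
          have key := hTC y c x (by rw [hydef]; linarith) hgt (by rw [hydef]; linarith)
          rw [hc0, zero_mul, show 2*(c - x) = -(2*(x-c)) by ring,
            show 2*(y - c) = -(2*(c-y)) by ring, Real.sin_neg, Real.sin_neg] at key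
          have s1pos : 0 < Real.sin (2*(c - y)) :=
            Real.sin_pos_of_pos_of_lt_pi (by rw [hydef]; linarith) (by rw [hydef]; linarith)
          have s2pos : 0 < Real.sin (2*(x - c)) :=
            Real.sin_pos_of_pos_of_lt_pi (by linarith) (by linarith)
          have hup : h x * Real.sin (2*(c - y)) ≤ 0 :=
            mul_nonpos_iff.2 (Or.inr ⟨h_le0 x, s1pos.le⟩)
          have hdn : 0 ≤ h x * Real.sin (2*(c - y)) := by
            nlinarith [mul_nonpos_iff.2 (Or.inr ⟨h_le0 y, s2pos.le⟩)]
          have := le_antisymm hup hdn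
          rcases mul_eq_zero.1 this with h0 | h0
          · exact h0
          · exact absurd h0 s1pos.ne'
      have hmem : ∀ x : ℝ, c - π/2 < x → x < c + π/2 → 2*x ∈ m := by
        intro x hx1 hx2
        rw [hm]
        simp only [Set.mem_setOf_eq]
        rw [hstretch, show (2*x)/2 = x by ring, hzero x hx1 hx2, hR]
      have m1 : 2*(c - π/4) ∈ m := hmem _ (by linarith) (by linarith)
      have m2 : 2*c ∈ m := hmem _ (by linarith) (by linarith)
      have m3 : 2*(c + π/4) ∈ m := hmem _ (by linarith) (by linarith)
      exact mk3 _ _ _ m1 m2 m3 (by linarith) (by linarith) (by linarith) (by linarith)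
        (by linarith)
  -- main statement
  intro t₁ ht₁ t₂ ht₂ k
  refine ⟨?_, ?_, ?_⟩
  · intro heq
    exact pair_pi t₂ ht₂ t₁ ht₁ (2*k) (by push_cast; linarith)
  · intro heq
    -- s and s + 2π are both in m
    set s := t₂ with hsdef
    have hs : s ∈ m := ht₂
    have hs2 : s + 2*π ∈ m := by
      have e := hm4 t₁ ht₁ (-k)
      push_cast at e
      have e2 : s + 2*π = t₁ + 4*π*(-(k:ℝ)) := by linarith
      rwa [← e2] at e
    -- the oracle from the convex hull condition
    have oracle : ∀ u : ℝ, ∃ x ∈ m, Real.cos (x - u) < 0 := by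
      intro u
      by_contra hcon
      push_neg at hcon
      rw [convexHull_eq] at hbal
      obtain ⟨ι, tF, w, z, hw0, hw1, hzP, hcm⟩ := hbal
      rw [Finset.centerMass_eq_of_sum_1 _ _ hw1] at hcm
      simp only [Set.mem_setOf_eq] at hzP
      have hzform : ∀ i ∈ tF, ∃ θ ∈ m,
          (z i * Complex.exp (-(Complex.I * u))).re = R * Real.cos (θ - u) ∧
          (z i * Complex.exp (-(Complex.I * u))).im = R * Real.sin (θ - u) := by
        intro i hi
        obtain ⟨θ, hθm, hθe⟩ := hzP i hi
        have key : z i * Complex.exp (-(Complex.I * u)) =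
            (R : ℂ) * (↑(Real.cos (θ - u)) + ↑(Real.sin (θ - u)) * Complex.I) := by
          rw [hθe, mul_assoc, ← Complex.exp_add]
          have e : Complex.I * (θ:ℂ) + -(Complex.I * (u:ℂ)) = (↑(θ - u)) * Complex.I := by
            push_cast; ring
          rw [e, Complex.exp_mul_I, Complex.ofReal_cos, Complex.ofReal_sin]
        refine ⟨θ, hθm, ?_, ?_⟩ <;> rw [key] <;>
          simp only [Complex.mul_re, Complex.mul_im, Complex.add_re, Complex.add_im,
            Complex.ofReal_re, Complex.ofReal_im, Complex.mul_I_re, Complex.mul_I_im,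
            Complex.I_re, Complex.I_im, mul_zero, mul_one, zero_mul, sub_zero, add_zero,
            zero_add, zero_sub, neg_neg, neg_zero] <;>
          first
          | ring
          | skip
      have hsum : ∑ i ∈ tF, w i • (z i * Complex.exp (-(Complex.I * u))) = 0 := by
        have e : ∑ i ∈ tF, w i • (z i * Complex.exp (-(Complex.I * u))) =
            (∑ i ∈ tF, w i • z i) * Complex.exp (-(Complex.I * u)) := by
          rw [Finset.sum_mul]
          exact Finset.sum_congr rfl (fun i _ => (smul_mul_assoc _ _ _).symm)
        rw [e, hcm, zero_mul]
      have hre : ∑ i ∈ tF, w i * (z i * Complex.exp (-(Complex.I * u))).re = 0 := by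
        have e := congrArg Complex.re hsum
        rw [Complex.re_sum] at e
        simpa [Complex.real_smul, Complex.mul_re] using e
      have him : ∑ i ∈ tF, w i * (z i * Complex.exp (-(Complex.I * u))).im = 0 := by
        have e := congrArg Complex.im hsum
        rw [Complex.im_sum] at e
        simpa [Complex.real_smul, Complex.mul_im] using e
      have hterm : ∀ i ∈ tF, w i * (z i * Complex.exp (-(Complex.I * u))).re = 0 := by
        apply (Finset.sum_eq_zero_iff_of_nonneg ?_).1 hre
        intro i hi
        obtain ⟨θ, hθm, hre', _⟩ := hzform i hi
        rw [hre']
        exact mul_nonneg (hw0 i hi) (mul_nonneg hRpos.le (hcon θ hθm))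
      have main : ∀ sg : ℝ, sg = 1 ∨ sg = -1 →
          (¬ ∃ θ ∈ m, Real.sin (θ - u) = sg) →
          ∑ i ∈ tF, w i * (z i * Complex.exp (-(Complex.I * u))).im = -sg * R := by
        intro sg hsg hno
        push_neg at hno
        have e : ∀ i ∈ tF, w i * (z i * Complex.exp (-(Complex.I * u))).im = -sg * R * w i := by
          intro i hi
          obtain ⟨θ, hθm, hre', him'⟩ := hzform i hi
          rcases eq_or_lt_of_le (hw0 i hi) with hw | hw
          · rw [← hw]; ring
          · have hcz : Real.cos (θ - u) = 0 := by
              have e2 := hterm i hi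
              rw [hre'] at e2
              rcases mul_eq_zero.1 e2 with h' | h'
              · exact absurd h'.symm hw.ne
              · rcases mul_eq_zero.1 h' with h'' | h''
                · exact absurd h'' hRpos.ne'
                · exact h''
            have hsq : (Real.sin (θ - u) - 1) * (Real.sin (θ - u) + 1) = 0 := by
              have h1 := Real.sin_sq_add_cos_sq (θ - u)
              rw [hcz] at h1
              nlinarith [h1]
            have hsm : Real.sin (θ - u) = -sg := by
              rcases mul_eq_zero.1 hsq with h' | h'
              · have h1 : Real.sin (θ - u) = 1 := by linarith
                rcases hsg with h2 | h2
                · exact absurd h1 (h2 ▸ hno θ hθm)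
                · rw [h1, h2]; ring
              · have h1 : Real.sin (θ - u) = -1 := by linarith
                rcases hsg with h2 | h2
                · rw [h1, h2]
                · exact absurd h1 (h2 ▸ hno θ hθm)
            rw [him', hsm]; ring
        rw [Finset.sum_congr rfl e, ← Finset.mul_sum, hw1, mul_one]
      have hexpos : ∃ θ ∈ m, Real.sin (θ - u) = 1 := by
        by_contra hno
        have := main 1 (Or.inl rfl) hno
        rw [him] at this
        have : R = 0 := by linarith
        exact absurd this hRpos.ne'
      have hexneg : ∃ θ ∈ m, Real.sin (θ - u) = -1 := by
        by_contra hno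
        have := main (-1) (Or.inr rfl) hno
        rw [him] at this
        have : R = 0 := by linarith
        exact absurd this hRpos.ne'
      obtain ⟨θ1, hθ1m, hs1⟩ := hexpos
      obtain ⟨θ2, hθ2m, hsneg⟩ := hexneg
      obtain ⟨k1, hk1⟩ := Real.sin_eq_one_iff.1 hs1
      obtain ⟨k2, hk2⟩ := Real.sin_eq_neg_one_iff.1 hsneg
      exact pair_pi θ2 hθ2m θ1 hθ1m (k1 - k2) (by push_cast; linarith)
    -- m is closed
    have hht_cont : Continuous ht := by
      have e : ht = fun t => h (t/2) := funext hstretch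
      rw [e]
      exact hcont.comp (continuous_id.div_const 2)
    have hmc : IsClosed m := by
      rw [hm]
      exact isClosed_singleton.preimage hht_cont
    -- the set of residues mod 2π (with some lift in m)
    set A : Set ℝ :=
      Icc 0 (2*π) ∩ ((fun d => s + d) ⁻¹' m ∪ (fun d => s + d + 2*π) ⁻¹' m) with hAdef
    have hAc : IsClosed A :=
      isClosed_Icc.inter
        ((hmc.preimage (continuous_const.add continuous_id)).union
          (hmc.preimage ((continuous_const.add continuous_id).add continuous_const)))
    have hA0 : (0:ℝ) ∈ A := ⟨⟨le_refl 0, by linarith⟩, Or.inl (by simpa using hs)⟩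
    have hAsub : ∀ d ∈ A, 0 ≤ d ∧ d ≤ 2*π := fun d hd => ⟨hd.1.1, hd.1.2⟩
    have hAlift : ∀ d ∈ A, s + d ∈ m ∨ s + d + 2*π ∈ m := fun d hd => hd.2
    have hAnti : ∀ d ∈ A, ∀ e ∈ A, e - d ≠ π := by
      intro d hd e he hde
      rcases hAlift d hd with hx | hx <;> rcases hAlift e he with hy | hy
      · exact pair_pi _ hx _ hy 0 (by push_cast; linarith)
      · exact pair_pi _ hx _ hy 1 (by push_cast; linarith)
      · exact pair_pi _ hx _ hy (-1) (by push_cast; linarith)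
      · exact pair_pi _ hx _ hy 0 (by push_cast; linarith)
    have oracleA : ∀ u : ℝ, ∃ d ∈ A, Real.cos (d - u) < 0 := by
      intro u
      obtain ⟨x, hx, hcos⟩ := oracle (s + u)
      set j : ℤ := ⌊(x - s)/(2*π)⌋ with hjdef
      set d : ℝ := x - s - 2*π*j with hddef
      have hj1 : (j:ℝ) ≤ (x - s)/(2*π) := Int.floor_le _
      have hj2 : (x - s)/(2*π) < j + 1 := Int.lt_floor_add_one _
      have hd0 : 0 ≤ d := by
        have e := (le_div_iff₀ (by linarith : (0:ℝ) < 2*π)).1 hj1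
        rw [hddef]; linarith
      have hd2 : d < 2*π := by
        have e := (div_lt_iff₀ (by linarith : (0:ℝ) < 2*π)).1 hj2
        rw [hddef]; linarith
      have hdm : s + d ∈ m ∨ s + d + 2*π ∈ m := by
        rcases Int.even_or_odd j with ⟨i, hi⟩ | ⟨i, hi⟩
        · left
          have e := hm4 x hx (-i)
          push_cast at e
          have e2 : s + d = x + 4*π*(-(i:ℝ)) := by
            rw [hddef, hi]; push_cast; ring
          rwa [← e2] at e
        · right
          have e := hm4 x hx (-i)
          push_cast at e
          have e2 : s + d + 2*π = x + 4*π*(-(i:ℝ)) := by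
            rw [hddef, hi]; push_cast; ring
          rwa [← e2] at e
      refine ⟨d, ⟨⟨hd0, hd2.le⟩, hdm⟩, ?_⟩
      have e : d - u = (x - (s + u)) - j*(2*π) := by rw [hddef]; ring
      rw [e, Real.cos_sub_int_mul_two_pi]
      exact hcos
    -- b := sup of A ∩ [0, π]
    have hBne : (A ∩ Icc 0 π).Nonempty := ⟨0, hA0, le_refl 0, hπ.le⟩
    have hBbdd : BddAbove (A ∩ Icc 0 π) := ⟨π, fun x hx => hx.2.2⟩
    set b := sSup (A ∩ Icc 0 π) with hbdef
    have hbB : b ∈ A ∩ Icc 0 π := (hAc.inter isClosed_Icc).csSup_mem hBne hBbdd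
    have hbA : b ∈ A := hbB.1
    have hb0 : 0 ≤ b := hbB.2.1
    have hble : ∀ x ∈ A, x ≤ π → x ≤ b :=
      fun x hx h1 => le_csSup hBbdd ⟨hx, (hAsub x hx).1, h1⟩
    have hbπ : b < π :=
      lt_of_le_of_ne hbB.2.2 (fun hbe => hAnti 0 hA0 b hbA (by rw [hbe]; ring))
    -- c := sup of A ∩ [0, b + π]
    have hCne : (A ∩ Icc 0 (b + π)).Nonempty := ⟨b, hbA, hb0, by linarith⟩
    have hCbdd : BddAbove (A ∩ Icc 0 (b + π)) := ⟨b + π, fun x hx => hx.2.2⟩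
    set cc := sSup (A ∩ Icc 0 (b + π)) with hccdef
    have hccC : cc ∈ A ∩ Icc 0 (b + π) := (hAc.inter isClosed_Icc).csSup_mem hCne hCbdd
    have hccA : cc ∈ A := hccC.1
    have hbcc : b ≤ cc := le_csSup hCbdd ⟨hbA, hb0, by linarith⟩
    have hcclt : cc < b + π :=
      lt_of_le_of_ne hccC.2.2 (fun hce => hAnti b hbA cc hccA (by rw [hce]; ring))
    have hccle : ∀ x ∈ A, x ≤ b + π → x ≤ cc :=
      fun x hx h1 => le_csSup hCbdd ⟨hx, (hAsub x hx).1, h1⟩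
    have hccπ : π < cc := by
      by_contra hle
      push_neg at hle
      have hcb : cc = b := le_antisymm (hble cc hccA hle) hbcc
      obtain ⟨d, hdA, hdcos⟩ := oracleA (b - π/2)
      have hnn : 0 ≤ Real.cos (d - (b - π/2)) := by
        rcases le_or_gt d π with hdle | hdgt
        · have hdb : d ≤ b := hble d hdA hdle
          apply Real.cos_nonneg_of_mem_Icc
          constructor
          · have := (hAsub d hdA).1; linarith
          · linarith
        · have hdgt' : b + π < d := by
            by_contra hcon2
            push_neg at hcon2
            have := hccle d hdA hcon2
            rw [hcb] at this
            linarith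
          rw [show d - (b - π/2) = (d - (b - π/2) - 2*π) + 2*π by ring, Real.cos_add_two_pi]
          apply Real.cos_nonneg_of_mem_Icc
          constructor
          · linarith
          · have := (hAsub d hdA).2; linarith
      linarith
    have hbpos : 0 < b := by linarith
    have hcc2π : cc < 2*π := by linarith
    -- the four cases on the lifts of b and cc
    have m4π : s + 4*π ∈ m := by
      have e := hm4 s hs 1
      push_cast at e
      have e2 : s + 4*π = s + 4*π*(1:ℝ) := by ring
      rwa [← e2] at e
    rcases hAlift b hbA with hbl | hbl <;> rcases hAlift cc hccA with hcl | hcl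
    · exact mk3 s (s + b) (s + cc) hs hbl hcl (by linarith) (by linarith) (by linarith)
        (by linarith) (by linarith)
    · have m3 : s + b + 4*π ∈ m := by
        have e := hm4 (s + b) hbl 1
        push_cast at e
        have e2 : s + b + 4*π = s + b + 4*π*(1:ℝ) := by ring
        rwa [← e2] at e
      exact mk3 (s + cc + 2*π) (s + 4*π) (s + b + 4*π) hcl m4π m3 (by linarith) (by linarith)
        (by linarith) (by linarith) (by linarith)
    · exact mk3 (s + cc) (s + 2*π) (s + b + 2*π) hcl hs2 hbl (by linarith) (by linarith)
        (by linarith) (by linarith) (by linarith)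
    · exact mk3 (s + 2*π) (s + b + 2*π) (s + cc + 2*π) hs2 hbl hcl (by linarith) (by linarith)
        (by linarith) (by linarith) (by linarith)
  · intro heq
    exact pair_pi t₂ ht₂ t₁ ht₁ (2*k+1) (by push_cast; linarith)
end

section
/- Let ρ=3 and define the π-periodic 3-trigonometrically convex function h by h(t+πk)=cos(|3t - 3π/2| - 5π/6) for t∈[0,π], k∈ℤ, which corresponds to the measure Δ = (1/2π)(√3·δ₀ + δ_{π/2} + √3·δ_π + δ_{3π/2}). For u∈[(√3-√2)/2, √3/2] let ψ=(arctan(2u)+π/2)/3 and define h*_u by h*_u(t+πk) = (1/2)cos 3t on [0,ψ], u·cos 3(t-π/2) on [ψ, π-ψ], and -(1/2)cos 3t on [π-ψ, π]. Then max_{t∈[0,2π]}(h(t)+h*_u(t)) = √3/2, attained at t=π/6. -/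
open Real Set

lemma absSinAux (x : ℝ) (hx : |x| ≤ π) : Real.sin |x| = |Real.sin x| := by
  rcases le_total 0 x with hx0 | hx0
  · rw [abs_of_nonneg hx0, abs_of_nonneg
      (Real.sin_nonneg_of_nonneg_of_le_pi hx0 (by rwa [abs_of_nonneg hx0] at hx))]
  · rw [abs_of_nonpos hx0, Real.sin_neg]
    rw [abs_of_nonpos hx0] at hx
    have : 0 ≤ Real.sin (-x) := Real.sin_nonneg_of_nonneg_of_le_pi (by linarith) hx
    rw [Real.sin_neg] at this
    rw [abs_of_nonpos (by linarith)]

lemma keyineqAux (a c s : ℝ) (_ha : 0 ≤ a) (ha2 : a ^ 2 ≤ 1 / 2) (hcs : c ^ 2 + s ^ 2 = 1) :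
    -a * c + 1 / 2 * |s| ≤ Real.sqrt 3 / 2 := by
  have h3 : Real.sqrt 3 ^ 2 = 3 := Real.sq_sqrt (by norm_num)
  have h3' : 0 ≤ Real.sqrt 3 := Real.sqrt_nonneg 3
  have habs : |s| ^ 2 = s ^ 2 := sq_abs s
  nlinarith [sq_nonneg (a * |s| + c / 2), abs_nonneg s]

theorem rho3_type_minimizing_family
    (u : ℝ) (hu₁ : (Real.sqrt 3 - Real.sqrt 2) / 2 ≤ u) (hu₂ : u ≤ Real.sqrt 3 / 2)
    (ψ : ℝ) (hψ : ψ = (Real.arctan (2 * u) + π / 2) / 3)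
    (h hstar : ℝ → ℝ)
    (hh : ∀ k : ℤ, ∀ t ∈ Set.Icc (0 : ℝ) π,
      h (t + π * k) = Real.cos (|3 * t - 3 * π / 2| - 5 * π / 6))
    (hs₁ : ∀ k : ℤ, ∀ t ∈ Set.Icc (0 : ℝ) ψ,
      hstar (t + π * k) = 1 / 2 * Real.cos (3 * t))
    (hs₂ : ∀ k : ℤ, ∀ t ∈ Set.Icc ψ (π - ψ),
      hstar (t + π * k) = u * Real.cos (3 * (t - π / 2)))
    (hs₃ : ∀ k : ℤ, ∀ t ∈ Set.Icc (π - ψ) π,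
      hstar (t + π * k) = -(1 / 2) * Real.cos (3 * t)) :
    IsGreatest ((fun t => h t + hstar t) '' Set.Icc 0 (2 * π)) (Real.sqrt 3 / 2) ∧
      h (π / 6) + hstar (π / 6) = Real.sqrt 3 / 2 := by
  have hπ := Real.pi_pos
  have hs23 : Real.sqrt 2 ≤ Real.sqrt 3 := Real.sqrt_le_sqrt (by norm_num)
  have hs2 : Real.sqrt 2 ^ 2 = 2 := Real.sq_sqrt (by norm_num)
  have hs2' : 0 ≤ Real.sqrt 2 := Real.sqrt_nonneg 2
  have hs3' : 0 ≤ Real.sqrt 3 := Real.sqrt_nonneg 3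
  have hu0 : 0 ≤ u := by linarith
  have hψ₁ : π / 6 ≤ ψ := by
    rw [hψ]
    have := Real.arctan_strictMono.monotone (by positivity : (0:ℝ) ≤ 2 * u)
    rw [Real.arctan_zero] at this
    linarith
  have hψ₂ : ψ < π / 3 := by
    rw [hψ]
    have := Real.arctan_lt_pi_div_two (2 * u)
    linarith
  -- value at π/6
  have eh : h (π / 6) = Real.sqrt 3 / 2 := by
    have e := hh 0 (π / 6) ⟨by positivity, by linarith⟩
    simp only [Int.cast_zero, mul_zero, add_zero] at e
    rw [e, show 3 * (π / 6) - 3 * π / 2 = -π by ring, abs_neg, abs_of_nonneg hπ.le,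
      show π - 5 * π / 6 = π / 6 by ring, Real.cos_pi_div_six]
  have es : hstar (π / 6) = 0 := by
    have e := hs₁ 0 (π / 6) ⟨by positivity, hψ₁⟩
    simp only [Int.cast_zero, mul_zero, add_zero] at e
    rw [e, show 3 * (π / 6) = π / 2 by ring, Real.cos_pi_div_two, mul_zero]
  have eval : h (π / 6) + hstar (π / 6) = Real.sqrt 3 / 2 := by rw [eh, es, add_zero]
  -- key bound
  have key : ∀ t ∈ Set.Icc (0 : ℝ) π, ∀ k : ℤ,
      h (t + π * k) + hstar (t + π * k) ≤ Real.sqrt 3 / 2 := by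
    intro t ht k
    obtain ⟨ht0, htπ⟩ := ht
    have c13 : Real.cos (π / 3) = 1 / 2 := Real.cos_pi_div_three
    have s13 : Real.sin (π / 3) = Real.sqrt 3 / 2 := Real.sin_pi_div_three
    rcases le_total t ψ with h1 | h1
    · rw [hh k t ⟨ht0, htπ⟩, hs₁ k t ⟨ht0, h1⟩,
        abs_of_nonpos (by nlinarith : 3 * t - 3 * π / 2 ≤ 0),
        show -(3 * t - 3 * π / 2) - 5 * π / 6 = 2 * π / 3 - 3 * t by ring, Real.cos_sub,
        show 2 * π / 3 = π - π / 3 by ring, Real.cos_pi_sub, Real.sin_pi_sub, c13, s13]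
      nlinarith [Real.sin_le_one (3 * t)]
    · rcases le_total t (π - ψ) with h2 | h2
      · rw [hh k t ⟨ht0, htπ⟩, hs₂ k t ⟨h1, h2⟩,
          show 3 * (t - π / 2) = 3 * t - 3 * π / 2 by ring]
        have hx : |3 * t - 3 * π / 2| ≤ π := abs_le.mpr ⟨by linarith, by linarith⟩
        rw [Real.cos_sub, Real.cos_abs, absSinAux _ hx,
          show 5 * π / 6 = π - π / 6 by ring, Real.cos_pi_sub, Real.sin_pi_sub,
          Real.cos_pi_div_six, Real.sin_pi_div_six]
        have ha2 : (Real.sqrt 3 / 2 - u) ^ 2 ≤ 1 / 2 := by nlinarith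
        have := keyineqAux (Real.sqrt 3 / 2 - u) (Real.cos (3 * t - 3 * π / 2))
          (Real.sin (3 * t - 3 * π / 2)) (by linarith) ha2
          (Real.cos_sq_add_sin_sq _)
        linarith [this]
      · rw [hh k t ⟨ht0, htπ⟩, hs₃ k t ⟨h2, htπ⟩,
          abs_of_nonneg (by nlinarith : (0:ℝ) ≤ 3 * t - 3 * π / 2),
          show 3 * t - 3 * π / 2 - 5 * π / 6 = (3 * t - π / 3) - 2 * π by ring,
          Real.cos_sub_two_pi, Real.cos_sub, c13, s13]
        nlinarith [Real.sin_le_one (3 * t)]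
  constructor
  · constructor
    · exact ⟨π / 6, ⟨by positivity, by linarith⟩, eval⟩
    · rintro y ⟨t, ⟨ht0, ht2⟩, rfl⟩
      rcases le_total t π with h1 | h1
      · have hk := key t ⟨ht0, h1⟩ 0
        simpa using hk
      · have hk := key (t - π) ⟨by linarith, by linarith⟩ 1
        have e : t - π + π * ((1 : ℤ) : ℝ) = t := by push_cast; ring
        rw [e] at hk
        exact hk
  · exact eval
end
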